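/- Let G be a group with finite generating set S such that D : M_{|S|×|S|}(I[G]) → I[G] is surjective and each hermitian element of M_{|S|×|S|}(I[G]) plus a nonnegative multiple of the identity matrix is a sum of hermitian squares in M_{|S|×|S|}(ℝG). Then the Laplacian Δ = d*d = ∑_{s∈S}(1-s)*(1-s) is an order unit in I[G]. -/

import Mathlib

open MonoidAlgebra

variable {G : Type} [Group G]

/-- The additive map on the real group ring induced by `g ↦ g⁻¹`. -/
noncomputable def mstarHom (G : Type) [Group G] :
    MonoidAlgebra ℝ G →+ MonoidAlgebra ℝ G :=
  { toFun := MonoidAlgebra.mapDomain Inv.inv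
    map_zero' := MonoidAlgebra.mapDomain_zero _
    map_add' := MonoidAlgebra.mapDomain_add _ }

lemma mstarHom_single (a : G) (r : ℝ) :
    mstarHom G (MonoidAlgebra.single a r) = MonoidAlgebra.single a⁻¹ r :=
  MonoidAlgebra.mapDomain_single

private lemma mstar_mul (f g : MonoidAlgebra ℝ G) :
    mstarHom G (f * g) = mstarHom G g * mstarHom G f := by
  induction f using MonoidAlgebra.induction_linear with
  | zero => simp
  | add a b ha hb => simp only [add_mul, map_add, ha, hb, mul_add]
  | single a r =>
    induction g using MonoidAlgebra.induction_linear with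
    | zero => simp
    | add c d hc hd => simp only [mul_add, map_add, hc, hd, add_mul]
    | single c s =>
      simp only [MonoidAlgebra.single_mul_single, mstarHom_single, mul_inv_rev,
        mul_comm]

/-- The star ring structure on `ℝG` whose involution is induced by `g ↦ g⁻¹`. -/
noncomputable instance grpStar : StarRing (MonoidAlgebra ℝ G) where
  star f := mstarHom G f
  star_involutive f := by
    show mstarHom G (mstarHom G f) = f
    induction f using MonoidAlgebra.induction_linear with
    | zero => simp
    | add x y hx hy => simp only [map_add, hx, hy]
    | single m r => simp only [mstarHom_single, inv_inv]
  star_add f g := map_add _ f g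
  star_mul f g := mstar_mul f g

/-- The augmentation ideal `I[G]`, as an `ℝ`-subspace of `ℝG`: the kernel of the
augmentation homomorphism sending every group element to `1`. -/
noncomputable def Iaug (G : Type) [Group G] : Submodule ℝ (MonoidAlgebra ℝ G) :=
  LinearMap.ker ((MonoidAlgebra.lift ℝ ℝ G 1).toLinearMap)

/-- Sums of hermitian squares `∑ aᵢ* aᵢ` in a `*`-algebra. -/
noncomputable def SOS (A : Type*) [NonUnitalSemiring A] [StarRing A] : AddSubmonoid A :=
  AddSubmonoid.closure {x | ∃ a, x = star a * a}

/-- The map `D(ξ) = d* ξ d = ∑_{s,t ∈ S} (1-s)* ξ_{st} (1-t)`. -/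
noncomputable def Dmap (S : Finset G) (ξ : Matrix S S (MonoidAlgebra ℝ G)) :
    MonoidAlgebra ℝ G :=
  ∑ s : S, ∑ t : S,
    star (1 - MonoidAlgebra.of ℝ G (s : G)) * ξ s t * (1 - MonoidAlgebra.of ℝ G (t : G))

variable {S : Finset G}

-- auxiliary lemmas

lemma star_smul' (c : ℝ) (f : MonoidAlgebra ℝ G) : star (c • f) = c • star f :=
  MonoidAlgebra.mapDomain_smul _ c f

lemma eps_star (f : MonoidAlgebra ℝ G) :
    (MonoidAlgebra.lift ℝ ℝ G 1) (star f) = (MonoidAlgebra.lift ℝ ℝ G 1) f := by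
  induction f using MonoidAlgebra.induction_linear with
  | zero => simp
  | add a b ha hb => rw [star_add, map_add, map_add, ha, hb]
  | single a r =>
    have : star (MonoidAlgebra.single a r) = MonoidAlgebra.single a⁻¹ r :=
      mstarHom_single a r
    rw [this]
    simp [MonoidAlgebra.lift_single]

lemma star_mem_Iaug {f : MonoidAlgebra ℝ G} (h : f ∈ Iaug G) : star f ∈ Iaug G := by
  simpa [Iaug, LinearMap.mem_ker, eps_star] using h

variable {S : Finset G}

lemma Dmap_add (ξ ζ : Matrix S S (MonoidAlgebra ℝ G)) :
    Dmap S (ξ + ζ) = Dmap S ξ + Dmap S ζ := by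
  simp [Dmap, Matrix.add_apply, mul_add, add_mul, Finset.sum_add_distrib]

lemma Dmap_smul (c : ℝ) (ξ : Matrix S S (MonoidAlgebra ℝ G)) :
    Dmap S (c • ξ) = c • Dmap S ξ := by
  simp [Dmap, Matrix.smul_apply, mul_smul_comm, smul_mul_assoc, Finset.smul_sum]

lemma Dmap_star (ξ : Matrix S S (MonoidAlgebra ℝ G)) :
    Dmap S (star ξ) = star (Dmap S ξ) := by
  unfold Dmap
  rw [Finset.sum_comm]
  simp only [star_sum, star_mul, star_star, Matrix.star_apply, mul_assoc]

lemma sum_rot {β : Type*} [AddCommMonoid β] (F : S → S → S → β) :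
    (∑ s : S, ∑ t : S, ∑ u : S, F s t u) = ∑ u : S, ∑ s : S, ∑ t : S, F s t u := by
  have h : ∀ s : S, (∑ t : S, ∑ u : S, F s t u) = ∑ u : S, ∑ t : S, F s t u :=
    fun s => Finset.sum_comm
  simp_rw [h]
  exact Finset.sum_comm

lemma Dmap_one [DecidableEq G] (l : ℝ) :
    Dmap S (l • (1 : Matrix S S (MonoidAlgebra ℝ G)))
      = l • ∑ s ∈ S, star (1 - MonoidAlgebra.of ℝ G s) * (1 - MonoidAlgebra.of ℝ G s) := by
  rw [Dmap_smul]
  unfold Dmap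
  congr 1
  rw [← Finset.sum_coe_sort S (fun s => star (1 - MonoidAlgebra.of ℝ G s) * (1 - MonoidAlgebra.of ℝ G s))]
  apply Finset.sum_congr rfl
  intro s _
  rw [Finset.sum_eq_single s]
  · simp [Matrix.one_apply]
  · intro t _ hts
    simp [Matrix.one_apply, (Ne.symm hts)]
  · simp

lemma Dmap_sos {ξ : Matrix S S (MonoidAlgebra ℝ G)}
    (h : ξ ∈ SOS (Matrix S S (MonoidAlgebra ℝ G))) :
    Dmap S ξ ∈ SOS (MonoidAlgebra ℝ G) := by
  induction h using AddSubmonoid.closure_induction with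
  | mem x hx =>
    obtain ⟨A, rfl⟩ := hx
    have key : Dmap S (star A * A)
        = ∑ u : S, star (∑ t : S, A u t * (1 - MonoidAlgebra.of ℝ G (t : G)))
            * (∑ t : S, A u t * (1 - MonoidAlgebra.of ℝ G (t : G))) := by
      calc Dmap S (star A * A)
          = ∑ s : S, ∑ t : S, ∑ u : S,
              (star (1 - MonoidAlgebra.of ℝ G (s : G)) * star (A u s)) *
                (A u t * (1 - MonoidAlgebra.of ℝ G (t : G))) := by
            refine Finset.sum_congr rfl fun s _ => Finset.sum_congr rfl fun t _ => ?_
            rw [Matrix.mul_apply]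
            simp only [Matrix.star_apply, Finset.sum_mul, Finset.mul_sum]
            exact Finset.sum_congr rfl fun u _ => by noncomm_ring
        _ = ∑ u : S, ∑ s : S, ∑ t : S,
              (star (1 - MonoidAlgebra.of ℝ G (s : G)) * star (A u s)) *
                (A u t * (1 - MonoidAlgebra.of ℝ G (t : G))) := sum_rot _
        _ = ∑ u : S, star (∑ t : S, A u t * (1 - MonoidAlgebra.of ℝ G (t : G)))
              * (∑ t : S, A u t * (1 - MonoidAlgebra.of ℝ G (t : G))) := by
            refine Finset.sum_congr rfl fun u _ => ?_
            rw [star_sum, Finset.sum_mul_sum]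
            exact Finset.sum_congr rfl fun s _ => Finset.sum_congr rfl fun t _ => by
              rw [star_mul]
    rw [key]
    exact AddSubmonoid.sum_mem _ fun u _ =>
      AddSubmonoid.subset_closure ⟨_, rfl⟩
  | zero =>
    have : Dmap S (0 : Matrix S S (MonoidAlgebra ℝ G)) = 0 := by simp [Dmap]
    rw [this]; exact zero_mem _
  | add x y hx hy ihx ihy =>
    rw [Dmap_add]; exact add_mem ihx ihy

/-- If `D : M_{|S|×|S|}(I[G]) → I[G]` is surjective and every hermitian matrix
over `I[G]` plus a suitable nonnegative multiple of the identity is a sum of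
hermitian squares, then `Δ = d*d = ∑_{s∈S}(1-s)*(1-s)` is an order unit in
`I[G]`. -/
theorem laplacian_order_unit (G : Type) [Group G] [DecidableEq G] (S : Finset G)
    (hS : Subgroup.closure (S : Set G) = ⊤)
    (hsurj : ∀ η ∈ Iaug G, ∃ ξ : Matrix S S (MonoidAlgebra ℝ G),
      (∀ s t : S, ξ s t ∈ Iaug G) ∧ Dmap S ξ = η)
    (hid : ∀ M : Matrix S S (MonoidAlgebra ℝ G), (∀ s t : S, M s t ∈ Iaug G) →
      star M = M → ∃ l : ℝ, 0 ≤ l ∧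
        M + l • (1 : Matrix S S (MonoidAlgebra ℝ G)) ∈
          SOS (Matrix S S (MonoidAlgebra ℝ G))) :
    ∀ η ∈ Iaug G, star η = η →
      ∃ l : ℝ, 0 ≤ l ∧
        η + l • ∑ s ∈ S, star (1 - MonoidAlgebra.of ℝ G s) * (1 - MonoidAlgebra.of ℝ G s)
          ∈ Iaug G ∧
        η + l • ∑ s ∈ S, star (1 - MonoidAlgebra.of ℝ G s) * (1 - MonoidAlgebra.of ℝ G s)
          ∈ SOS (MonoidAlgebra ℝ G) := by
  intro η hη hηstar
  obtain ⟨ξ, hξI, hξD⟩ := hsurj η hη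
  set M : Matrix S S (MonoidAlgebra ℝ G) := (1/2 : ℝ) • (ξ + star ξ) with hM
  have hMI : ∀ s t : S, M s t ∈ Iaug G := by
    intro s t
    have : M s t = (1/2 : ℝ) • (ξ s t + star (ξ t s)) := by
      simp [hM, Matrix.smul_apply, Matrix.add_apply, Matrix.star_apply]
    rw [this]
    exact Submodule.smul_mem _ _ (add_mem (hξI s t) (star_mem_Iaug (hξI t s)))
  have hMstar : star M = M := by
    ext s t
    simp only [Matrix.star_apply, hM, Matrix.smul_apply, Matrix.add_apply]
    rw [star_smul' (1/2 : ℝ), star_add, star_star, add_comm]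
  have hMD : Dmap S M = η := by
    rw [hM, Dmap_smul, Dmap_add, Dmap_star, hξD, hηstar, smul_add, ← add_smul]
    norm_num
  obtain ⟨l, hl0, hsos⟩ := hid M hMI hMstar
  refine ⟨l, hl0, ?_, ?_⟩
  · -- membership in Iaug
    apply Submodule.add_mem _ hη
    apply Submodule.smul_mem
    apply Submodule.sum_mem
    intro s _
    simp only [Iaug, LinearMap.mem_ker, AlgHom.toLinearMap_apply, map_mul]
    have h1 : (MonoidAlgebra.lift ℝ ℝ G 1) (1 - MonoidAlgebra.of ℝ G s) = 0 := by
      simp [map_sub]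
    rw [eps_star, h1, mul_zero]
  · have := Dmap_sos hsos
    rwa [Dmap_add, hMD, Dmap_one] at this
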